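/- For all natural numbers n ≥ 0, the type D Bell number is given by the convergent series D(n) = e^(-1/2) · Σ_{r≥0} (1/(2^r · r!)) · ((2r+1)^n - n·(2r)^(n-1)). -/

import Mathlib

/-- The classical Stirling numbers of the second kind, defined by the recurrence
`S(n,k) = S(n-1,k-1) + k·S(n-1,k)` with `S(0,k) = δ_{0,k}`. -/
def stirling2 : ℕ → ℕ → ℕ
  | 0, 0 => 1
  | 0, _ + 1 => 0
  | _ + 1, 0 => 0
  | n + 1, k + 1 => stirling2 n k + (k + 1) * stirling2 n (k + 1)

/-- The type `B` Stirling numbers of the second kind, defined by the recurrence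
`S_B(n,k) = S_B(n-1,k-1) + (2k+1)·S_B(n-1,k)` with `S_B(0,k) = δ_{0,k}`. -/
def stirlingB : ℕ → ℕ → ℕ
  | 0, 0 => 1
  | 0, _ + 1 => 0
  | n + 1, 0 => stirlingB n 0
  | n + 1, k + 1 => stirlingB n k + (2 * (k + 1) + 1) * stirlingB n (k + 1)

/-- The type `B` Bell numbers: `B(n) = Σ_{k=0}^{n} S_B(n,k)`. -/
def bellB (n : ℕ) : ℕ := ∑ k ∈ Finset.range (n + 1), stirlingB n k

/-- The type `D` Stirling numbers of the second kind:
`S_D(n,k) = S_B(n,k) - n·2^(n-1-k)·S(n-1,k)` for `n ≥ 1` and `0 ≤ k ≤ n-1`,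
with `S_D(n,n) = 1` and `S_D(0,k) = δ_{0,k}`. -/
def stirlingD (n k : ℕ) : ℤ :=
  if n = 0 then (if k = 0 then 1 else 0)
  else if k = n then 1
  else if k ≤ n - 1 then
    (stirlingB n k : ℤ) - (n : ℤ) * 2 ^ (n - 1 - k) * (stirling2 (n - 1) k : ℤ)
  else 0

/-- The type `D` Bell numbers: `D(n) = Σ_{k=0}^{n} S_D(n,k)`. -/
def bellD (n : ℕ) : ℤ := ∑ k ∈ Finset.range (n + 1), stirlingD n k

lemma stirling2_eq_zero : ∀ {m k : ℕ}, m < k → stirling2 m k = 0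
  | 0, _ + 1, _ => rfl
  | m + 1, k + 1, h => by
      show stirling2 m k + (k + 1) * stirling2 m (k + 1) = 0
      rw [stirling2_eq_zero (by omega), stirling2_eq_zero (by omega)]
      simp

lemma stirlingB_eq_zero : ∀ {m k : ℕ}, m < k → stirlingB m k = 0
  | 0, _ + 1, _ => rfl
  | m + 1, k + 1, h => by
      show stirlingB m k + (2 * (k + 1) + 1) * stirlingB m (k + 1) = 0
      rw [stirlingB_eq_zero (by omega), stirlingB_eq_zero (by omega)]
      simp

lemma stirlingB_self : ∀ n : ℕ, stirlingB n n = 1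
  | 0 => rfl
  | n + 1 => by
      show stirlingB n n + (2 * (n + 1) + 1) * stirlingB n (n + 1) = 1
      rw [stirlingB_self n, stirlingB_eq_zero (by omega)]
      simp

lemma descF_mulB (r k : ℕ) : (2 * r + 1) * r.descFactorial k
    = 2 * r.descFactorial (k + 1) + (2 * k + 1) * r.descFactorial k := by
  rcases le_or_gt k r with h | h
  · rw [Nat.descFactorial_succ]
    have h2 : 2 * (r - k) + (2 * k + 1) = 2 * r + 1 := by omega
    symm
    calc 2 * ((r - k) * r.descFactorial k) + (2 * k + 1) * r.descFactorial k
        = (2 * (r - k) + (2 * k + 1)) * r.descFactorial k := by ring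
      _ = (2 * r + 1) * r.descFactorial k := by rw [h2]
  · rw [Nat.descFactorial_eq_zero_iff_lt.2 h, Nat.descFactorial_eq_zero_iff_lt.2 (by omega)]
    simp

lemma descF_mul2 (r k : ℕ) : r * r.descFactorial k
    = r.descFactorial (k + 1) + k * r.descFactorial k := by
  rcases le_or_gt k r with h | h
  · rw [Nat.descFactorial_succ]
    have h2 : (r - k) + k = r := by omega
    symm
    calc (r - k) * r.descFactorial k + k * r.descFactorial k
        = ((r - k) + k) * r.descFactorial k := by ring
      _ = r * r.descFactorial k := by rw [h2]
  · rw [Nat.descFactorial_eq_zero_iff_lt.2 h, Nat.descFactorial_eq_zero_iff_lt.2 (by omega)]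
    simp

open Finset in
lemma sumB : ∀ (n r : ℕ),
    (2 * r + 1) ^ n = ∑ k ∈ range (n + 1), stirlingB n k * 2 ^ k * r.descFactorial k
  | 0, r => by simp [stirlingB]
  | n + 1, r => by
    have step : (2 * r + 1) ^ (n + 1)
        = ∑ k ∈ range (n + 1), (stirlingB n k * 2 ^ (k + 1) * r.descFactorial (k + 1)
            + (2 * k + 1) * (stirlingB n k * 2 ^ k * r.descFactorial k)) := by
      rw [pow_succ, sumB n r, Finset.sum_mul]
      refine Finset.sum_congr rfl fun k _ => ?_
      have := descF_mulB r k
      calc stirlingB n k * 2 ^ k * r.descFactorial k * (2 * r + 1)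
          = stirlingB n k * 2 ^ k * ((2 * r + 1) * r.descFactorial k) := by ring
        _ = stirlingB n k * 2 ^ k *
            (2 * r.descFactorial (k + 1) + (2 * k + 1) * r.descFactorial k) := by rw [this]
        _ = stirlingB n k * 2 ^ (k + 1) * r.descFactorial (k + 1)
            + (2 * k + 1) * (stirlingB n k * 2 ^ k * r.descFactorial k) := by ring
    rw [step, Finset.sum_add_distrib]
    -- second sum: peel off k = 0
    rw [Finset.sum_range_succ' (fun k => (2 * k + 1) * (stirlingB n k * 2 ^ k * r.descFactorial k)) n]
    -- RHS: peel off k = 0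
    rw [Finset.sum_range_succ' (fun k => stirlingB (n + 1) k * 2 ^ k * r.descFactorial k) (n + 1)]
    have h0 : stirlingB (n + 1) 0 * 2 ^ 0 * r.descFactorial 0
        = (2 * 0 + 1) * (stirlingB n 0 * 2 ^ 0 * r.descFactorial 0) := by
      show stirlingB n 0 * 2 ^ 0 * r.descFactorial 0 = _
      ring
    rw [h0]
    have hsplit : ∀ k, stirlingB (n + 1) (k + 1) * 2 ^ (k + 1) * r.descFactorial (k + 1)
        = stirlingB n k * 2 ^ (k + 1) * r.descFactorial (k + 1)
          + (2 * (k + 1) + 1) * (stirlingB n (k + 1) * 2 ^ (k + 1) * r.descFactorial (k + 1)) := by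
      intro k
      show (stirlingB n k + (2 * (k + 1) + 1) * stirlingB n (k + 1)) * 2 ^ (k + 1) * r.descFactorial (k + 1) = _
      ring
    have hlast : Finset.sum (range n)
          (fun k => (2 * (k + 1) + 1) * (stirlingB n (k + 1) * 2 ^ (k + 1) * r.descFactorial (k + 1)))
        = Finset.sum (range (n + 1))
          (fun k => (2 * (k + 1) + 1) * (stirlingB n (k + 1) * 2 ^ (k + 1) * r.descFactorial (k + 1))) := by
      rw [Finset.sum_range_succ, stirlingB_eq_zero (by omega)]
      simp
    rw [hlast]
    conv_rhs => rw [Finset.sum_congr rfl (fun k _ => hsplit k)]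
    rw [Finset.sum_add_distrib]
    ring

open Finset in
lemma sum2 : ∀ (n r : ℕ),
    r ^ n = ∑ k ∈ range (n + 1), stirling2 n k * r.descFactorial k
  | 0, r => by simp [stirling2]
  | n + 1, r => by
    have step : r ^ (n + 1)
        = ∑ k ∈ range (n + 1), (stirling2 n k * r.descFactorial (k + 1)
            + k * (stirling2 n k * r.descFactorial k)) := by
      rw [pow_succ, sum2 n r, Finset.sum_mul]
      refine Finset.sum_congr rfl fun k _ => ?_
      have := descF_mul2 r k
      calc stirling2 n k * r.descFactorial k * r
          = stirling2 n k * (r * r.descFactorial k) := by ring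
        _ = stirling2 n k * (r.descFactorial (k + 1) + k * r.descFactorial k) := by rw [this]
        _ = stirling2 n k * r.descFactorial (k + 1) + k * (stirling2 n k * r.descFactorial k) := by
            ring
    rw [step, Finset.sum_add_distrib]
    rw [Finset.sum_range_succ' (fun k => k * (stirling2 n k * r.descFactorial k)) n]
    rw [Finset.sum_range_succ' (fun k => stirling2 (n + 1) k * r.descFactorial k) (n + 1)]
    have h0 : stirling2 (n + 1) 0 * r.descFactorial 0 = 0 := by
      show (0 : ℕ) * r.descFactorial 0 = 0
      ring
    rw [h0]
    have hsplit : ∀ k, stirling2 (n + 1) (k + 1) * r.descFactorial (k + 1)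
        = stirling2 n k * r.descFactorial (k + 1)
          + (k + 1) * (stirling2 n (k + 1) * r.descFactorial (k + 1)) := by
      intro k
      show (stirling2 n k + (k + 1) * stirling2 n (k + 1)) * r.descFactorial (k + 1) = _
      ring
    have hlast : Finset.sum (range n)
          (fun k => (k + 1) * (stirling2 n (k + 1) * r.descFactorial (k + 1)))
        = Finset.sum (range (n + 1))
          (fun k => (k + 1) * (stirling2 n (k + 1) * r.descFactorial (k + 1))) := by
      rw [Finset.sum_range_succ, stirling2_eq_zero (by omega)]
      simp
    rw [hlast]
    conv_rhs => rw [Finset.sum_congr rfl (fun k _ => hsplit k)]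
    rw [Finset.sum_add_distrib]
    ring

lemma hasSum_half : HasSum (fun s : ℕ => ((1 : ℝ) / 2) ^ s / s.factorial) (Real.exp (1 / 2)) := by
  have h1 := Real.summable_pow_div_factorial (1 / 2)
  have h2 : Real.exp (1 / 2) = ∑' s : ℕ, ((1 : ℝ) / 2) ^ s / s.factorial := by
    rw [Real.exp_eq_exp_ℝ, NormedSpace.exp_eq_tsum_div]
  rw [h2]
  exact h1.hasSum

lemma hasSum_g (k : ℕ) :
    HasSum (fun r : ℕ => (r.descFactorial k : ℝ) / (2 ^ r * r.factorial))
      (Real.exp (1 / 2) / 2 ^ k) := by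
  set f : ℕ → ℝ := fun r => (r.descFactorial k : ℝ) / (2 ^ r * r.factorial) with hf
  have hi : Function.Injective (fun s : ℕ => s + k) := add_left_injective k
  have hcomp : ∀ s : ℕ, f (s + k) = (1 / 2) ^ k * (((1 : ℝ) / 2) ^ s / s.factorial) := by
    intro s
    have hfac : (s.factorial : ℝ) * ((s + k).descFactorial k : ℝ) = ((s + k).factorial : ℝ) := by
      have h1 := Nat.factorial_mul_descFactorial (n := s + k) (k := k) (by omega)
      have h2 : s + k - k = s := by omega
      rw [h2] at h1
      exact_mod_cast h1
    have hne : ((s + k).factorial : ℝ) ≠ 0 := Nat.cast_ne_zero.2 (Nat.factorial_ne_zero _)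
    have hsne : (s.factorial : ℝ) ≠ 0 := Nat.cast_ne_zero.2 (Nat.factorial_ne_zero _)
    have h2ne : (2 : ℝ) ^ (s + k) ≠ 0 := by positivity
    rw [hf]
    field_simp
    have e : ∀ m : ℕ, (2 : ℝ) ^ m * (1 / 2) ^ m = 1 := fun m => by rw [← mul_pow]; norm_num
    linear_combination (-(((s + k).descFactorial k : ℝ) * s.factorial)) * e k
      - (((s + k).descFactorial k : ℝ) * s.factorial * (2 ^ k * (1 / 2) ^ k)) * e s
      + ((2 : ℝ) ^ (s + k) * (1 / 2) ^ k * (1 / 2) ^ s) * hfac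
  have hsum : HasSum (fun s : ℕ => f (s + k)) (Real.exp (1 / 2) / 2 ^ k) := by
    have := hasSum_half.mul_left (((1 : ℝ) / 2) ^ k)
    have heq : ((1 : ℝ) / 2) ^ k * Real.exp (1 / 2) = Real.exp (1 / 2) / 2 ^ k := by
      rw [div_pow, one_pow]; ring
    rw [heq] at this
    exact this.congr_fun hcomp
  refine (Function.Injective.hasSum_iff hi ?_).1 hsum
  intro r hr
  have hrk : r < k := by
    by_contra h
    exact hr ⟨r - k, by show r - k + k = r; omega⟩
  rw [hf]
  simp only [Nat.descFactorial_eq_zero_iff_lt.2 hrk, Nat.cast_zero, zero_div]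


set_option maxHeartbeats 1000000 in
/-- `D(n) = e^(-1/2) · Σ_{r≥0} (1/(2^r·r!))·((2r+1)^n - n·(2r)^(n-1))`,
a convergent series (with `n·(2r)^(n-1)` interpreted as `0` when `n = 0`). -/
theorem bellD_eq_tsum (n : ℕ) :
    Summable (fun r : ℕ =>
      (1 / (2 ^ r * (r.factorial : ℝ))) * ((2 * r + 1 : ℝ) ^ n - n * (2 * r : ℝ) ^ (n - 1))) ∧
    (bellD n : ℝ)
      = Real.exp (-1 / 2) * ∑' r : ℕ,
          (1 / (2 ^ r * (r.factorial : ℝ))) * ((2 * r + 1 : ℝ) ^ n - n * (2 * r : ℝ) ^ (n - 1)) := by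
  set c : ℕ → ℝ := fun k =>
    (stirlingB n k : ℝ) * 2 ^ k - (n : ℝ) * 2 ^ (n - 1) * (stirling2 (n - 1) k : ℝ) with hc
  have hB : ∀ r : ℕ, (2 * (r : ℝ) + 1) ^ n
      = ∑ k ∈ Finset.range (n + 1), (stirlingB n k : ℝ) * 2 ^ k * (r.descFactorial k : ℝ) := by
    intro r
    exact_mod_cast congrArg (Nat.cast (R := ℝ)) (sumB n r)
  have h2 : ∀ r : ℕ, (n : ℝ) * (2 * (r : ℝ)) ^ (n - 1)
      = (n : ℝ) * 2 ^ (n - 1) *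
          ∑ k ∈ Finset.range (n + 1), (stirling2 (n - 1) k : ℝ) * (r.descFactorial k : ℝ) := by
    intro r
    rcases Nat.eq_zero_or_pos n with hn | hn
    · simp [hn]
    · have hext : ∑ k ∈ Finset.range (n + 1), (stirling2 (n - 1) k : ℝ) * (r.descFactorial k : ℝ)
          = ∑ k ∈ Finset.range ((n - 1) + 1), (stirling2 (n - 1) k : ℝ) * (r.descFactorial k : ℝ) := by
        have hn1 : (n - 1) + 1 = n := by omega
        rw [hn1, Finset.sum_range_succ, stirling2_eq_zero (by omega)]
        simp
      have hcast : ((r : ℝ)) ^ (n - 1)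
          = ∑ k ∈ Finset.range ((n - 1) + 1), (stirling2 (n - 1) k : ℝ) * (r.descFactorial k : ℝ) := by
        exact_mod_cast congrArg (Nat.cast (R := ℝ)) (sum2 (n - 1) r)
      rw [hext, ← hcast, mul_pow]
      ring
  have hF : ∀ r : ℕ,
      (1 / (2 ^ r * (r.factorial : ℝ))) * ((2 * r + 1 : ℝ) ^ n - n * (2 * r : ℝ) ^ (n - 1))
        = ∑ k ∈ Finset.range (n + 1), c k * ((r.descFactorial k : ℝ) / (2 ^ r * r.factorial)) := by
    intro r
    rw [hB r, h2 r, Finset.mul_sum, ← Finset.sum_sub_distrib, Finset.mul_sum]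
    refine Finset.sum_congr rfl fun k _ => ?_
    rw [hc]
    ring
  have hS : HasSum
      (fun r : ℕ =>
        (1 / (2 ^ r * (r.factorial : ℝ))) * ((2 * r + 1 : ℝ) ^ n - n * (2 * r : ℝ) ^ (n - 1)))
      (∑ k ∈ Finset.range (n + 1), c k * (Real.exp (1 / 2) / 2 ^ k)) := by
    have h0 : HasSum
        (fun r : ℕ => ∑ k ∈ Finset.range (n + 1),
          c k * ((r.descFactorial k : ℝ) / (2 ^ r * r.factorial)))
        (∑ k ∈ Finset.range (n + 1), c k * (Real.exp (1 / 2) / 2 ^ k)) :=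
      hasSum_sum (fun k _ => (hasSum_g k).mul_left (c k))
    exact h0.congr_fun hF
  refine ⟨hS.summable, ?_⟩
  rw [hS.tsum_eq, Finset.mul_sum]
  have hE : Real.exp (-1 / 2) * Real.exp (1 / 2) = 1 := by
    rw [← Real.exp_add]; norm_num
  have hterm : ∀ k, Real.exp (-1 / 2) * (c k * (Real.exp (1 / 2) / 2 ^ k)) = c k / 2 ^ k := by
    intro k
    calc Real.exp (-1 / 2) * (c k * (Real.exp (1 / 2) / 2 ^ k))
        = (Real.exp (-1 / 2) * Real.exp (1 / 2)) * (c k / 2 ^ k) := by ring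
      _ = c k / 2 ^ k := by rw [hE]; ring
  rw [Finset.sum_congr rfl fun k _ => hterm k]
  -- now show (bellD n : ℝ) = ∑ k ∈ range (n+1), c k / 2 ^ k
  rcases Nat.eq_zero_or_pos n with hn | hn
  · subst hn
    rw [Finset.sum_range_one]
    have h1 : bellD 0 = 1 := by simp [bellD, stirlingD]
    rw [h1, hc]
    norm_num [show stirlingB 0 0 = 1 from rfl]
  · have hcast : (bellD n : ℝ) = ∑ k ∈ Finset.range (n + 1), (stirlingD n k : ℝ) := by
      rw [bellD]; push_cast; ring
    rw [hcast, Finset.sum_range_succ, Finset.sum_range_succ]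
    have hlastL : (stirlingD n n : ℝ) = 1 := by
      rw [stirlingD, if_neg (by omega), if_pos rfl]
      norm_num
    have hlastR : c n / 2 ^ n = 1 := by
      rw [hc]
      simp only
      rw [stirlingB_self, stirling2_eq_zero (by omega)]
      push_cast
      field_simp
      ring
    rw [hlastL, hlastR]
    congr 1
    refine Finset.sum_congr rfl fun k hk => ?_
    have hk' : k < n := Finset.mem_range.1 hk
    have hD : stirlingD n k = (stirlingB n k : ℤ) - (n : ℤ) * 2 ^ (n - 1 - k) * (stirling2 (n - 1) k : ℤ) := by
      rw [stirlingD]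
      rw [if_neg (by omega), if_neg (by omega), if_pos (by omega)]
    have hpow : (2 : ℝ) ^ (n - 1 - k) * 2 ^ k = 2 ^ (n - 1) := by
      rw [← pow_add]
      congr 1
      omega
    have h2k : (2 : ℝ) ^ k ≠ 0 := by positivity
    rw [hD, hc]
    push_cast
    rw [eq_div_iff h2k]
    linear_combination (-(n : ℝ) * (stirling2 (n - 1) k : ℝ)) * hpow
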